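/- Let 1 ≤ a < a+l ≤ k, n ≥ k, and 1 ≤ i ≤ n-k+1. Then c_{a,l}^k(n; n-k+a+1-i) = Σ_{j=0}^{⌊(i-1)/l⌋+1} (-1)^j · binom(i-(j-1)(l-1), j) · c_{a,l}^k(n-1-j). -/
import Mathlib


open Finset

/-- `π` contains an occurrence of the generalized pattern given by `σ ∈ S_k`,
where `adj j` means that positions `j` and `j+1` of the pattern must be
matched to adjacent positions of the permutation. -/
def IsOcc {n k : ℕ} (π : Equiv.Perm (Fin n)) (σ : Equiv.Perm (Fin k)) (adj : ℕ → Prop) : Prop :=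
  ∃ ι : Fin k → Fin n, StrictMono ι ∧
    (∀ j : ℕ, ∀ hj : j + 1 < k, adj j → (ι ⟨j + 1, hj⟩ : ℕ) = (ι ⟨j, by omega⟩ : ℕ) + 1) ∧
    (∀ s t : Fin k, σ s < σ t ↔ π (ι s) < π (ι t))

/-- `π` avoids every pattern in `C_{a,l}^k` (patterns `σ₁σ₂-σ₃-⋯-σ_k` with
`σ₁ = a`, `σ₂ = a + l`, first two letters adjacent); values are `1`-based. -/
def AvoidsC (a l k : ℕ) {n : ℕ} (π : Equiv.Perm (Fin n)) : Prop :=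
  ∀ σ : Equiv.Perm (Fin k), ∀ h0 : 0 < k, ∀ h1 : 1 < k,
    (σ ⟨0, h0⟩ : ℕ) + 1 = a → (σ ⟨1, h1⟩ : ℕ) + 1 = a + l →
    ¬ IsOcc π σ (fun j => j = 0)

/-- `c_{a,l}^k(n)`. -/
noncomputable def cC (a l k n : ℕ) : ℕ :=
  Nat.card {π : Equiv.Perm (Fin n) // AvoidsC a l k π}

/-- `c_{a,l}^k(n; j)`: additionally the first letter of the permutation is `j` (1-based). -/
noncomputable def cCf (a l k n j : ℕ) : ℕ :=
  Nat.card {π : Equiv.Perm (Fin n) //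
    AvoidsC a l k π ∧ ∀ hn : 0 < n, (π ⟨0, hn⟩ : ℕ) + 1 = j}

open Equiv


section Decomp
variable {m : ℕ}

/-- Reduction of a permutation of `Fin (m+1)`: delete first letter, renormalize values. -/
def restPerm (π : Perm (Fin (m + 1))) : Perm (Fin m) :=
  Equiv.removeNone ((finSuccEquiv' (0 : Fin (m + 1))).symm.trans
    (π.trans (finSuccEquiv' (π 0))))

lemma restPerm_spec (π : Perm (Fin (m + 1))) (i : Fin m) :
    π i.succ = (π 0).succAbove (restPerm π i) := by
  have hne : π i.succ ≠ π 0 := fun h => by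
    have := π.injective h; exact (Fin.succ_ne_zero i) this
  obtain ⟨j, hj⟩ := Fin.exists_succAbove_eq hne
  have he : ((finSuccEquiv' (0 : Fin (m + 1))).symm.trans
      (π.trans (finSuccEquiv' (π 0)))) (some i) = some j := by
    simp only [Equiv.trans_apply]
    rw [finSuccEquiv'_symm_some, Fin.zero_succAbove, ← hj, finSuccEquiv'_succAbove]
  have := Equiv.removeNone_some _ ⟨j, he⟩
  rw [he] at this
  have hrj : restPerm π i = j := by
    simpa [restPerm] using (Option.some_injective _ this.symm).symm
  rw [hrj, hj]

/-- Build a permutation of `Fin (m+1)` from a first letter and the rest. -/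
def buildPerm (p : Fin (m + 1)) (e : Perm (Fin m)) : Perm (Fin (m + 1)) :=
  (finSuccEquiv' (0 : Fin (m + 1))).trans ((e.optionCongr).trans (finSuccEquiv' p).symm)

@[simp] lemma buildPerm_zero (p : Fin (m + 1)) (e : Perm (Fin m)) : buildPerm p e 0 = p := by
  simp [buildPerm, finSuccEquiv'_at, finSuccEquiv'_symm_none]

@[simp] lemma buildPerm_succ (p : Fin (m + 1)) (e : Perm (Fin m)) (i : Fin m) :
    buildPerm p e i.succ = p.succAbove (e i) := by
  have : finSuccEquiv' (0 : Fin (m + 1)) i.succ = some i := by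
    rw [← Fin.zero_succAbove, finSuccEquiv'_succAbove]
  simp [buildPerm, this, finSuccEquiv'_symm_some]

lemma buildPerm_restPerm (π : Perm (Fin (m + 1))) : buildPerm (π 0) (restPerm π) = π := by
  ext x
  cases x using Fin.cases with
  | zero => simp
  | succ i => rw [buildPerm_succ, ← restPerm_spec]

lemma restPerm_buildPerm (p : Fin (m + 1)) (e : Perm (Fin m)) :
    restPerm (buildPerm p e) = e := by
  ext i
  have h := restPerm_spec (buildPerm p e) i
  rw [buildPerm_succ, buildPerm_zero] at h
  exact congrArg Fin.val (Fin.succAbove_right_injective h.symm)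

end Decomp

section Cards

def icoEquiv (N c d : ℕ) (hd : d ≤ N) :
    {x : Fin N // c ≤ (x : ℕ) ∧ (x : ℕ) < d} ≃ Fin (d - c) where
  toFun x := ⟨(x.1 : ℕ) - c, by omega⟩
  invFun y := ⟨⟨(y : ℕ) + c, by omega⟩, by constructor <;> simp <;> omega⟩
  left_inv x := by ext; simp; omega
  right_inv y := by ext; simp

lemma card_lt (N d : ℕ) (hd : d ≤ N) : Nat.card {x : Fin N // (x : ℕ) < d} = d := by
  have e : {x : Fin N // (x : ℕ) < d} ≃ {x : Fin N // 0 ≤ (x : ℕ) ∧ (x : ℕ) < d} :=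
    Equiv.subtypeEquivRight (by simp)
  rw [Nat.card_congr (e.trans (icoEquiv N 0 d hd))]
  simp [Nat.card_eq_fintype_card]

lemma card_between (N c d : ℕ) (hd : d ≤ N) :
    Nat.card {x : Fin N // c < (x : ℕ) ∧ (x : ℕ) < d} = d - c - 1 := by
  have e : {x : Fin N // c < (x : ℕ) ∧ (x : ℕ) < d} ≃
      {x : Fin N // c + 1 ≤ (x : ℕ) ∧ (x : ℕ) < d} := Equiv.subtypeEquivRight (by omega)
  rw [Nat.card_congr (e.trans (icoEquiv N (c + 1) d hd))]
  simp [Nat.card_eq_fintype_card]; omega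

lemma card_gt (N c : ℕ) : Nat.card {x : Fin N // c < (x : ℕ)} = N - c - 1 := by
  have e : {x : Fin N // c < (x : ℕ)} ≃
      {x : Fin N // c + 1 ≤ (x : ℕ) ∧ (x : ℕ) < N} :=
    Equiv.subtypeEquivRight (fun x => by simpa using by omega)
  rw [Nat.card_congr (e.trans (icoEquiv N (c + 1) N le_rfl))]
  simp [Nat.card_eq_fintype_card]; omega

end Cards

section Pattern

/-- `π` contains some pattern from `C_{a,l}^k`. -/
def ContainsC (a l k : ℕ) {n : ℕ} (π : Perm (Fin n)) : Prop :=
  ∃ σ : Perm (Fin k), ∃ h0 : 0 < k, ∃ h1 : 1 < k,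
    (σ ⟨0, h0⟩ : ℕ) + 1 = a ∧ (σ ⟨1, h1⟩ : ℕ) + 1 = a + l ∧
    IsOcc π σ (fun j => j = 0)

lemma avoidsC_iff_not_containsC (a l k : ℕ) {n : ℕ} (π : Perm (Fin n)) :
    AvoidsC a l k π ↔ ¬ ContainsC a l k π := by
  constructor
  · rintro h ⟨σ, h0, h1, c1, c2, occ⟩
    exact h σ h0 h1 c1 c2 occ
  · intro h σ h0 h1 c1 c2 occ
    exact h ⟨σ, h0, h1, c1, c2, occ⟩

end Pattern

section Transfer
variable {a l k : ℕ}

lemma containsC_of_rest {m : ℕ} (π : Perm (Fin (m + 1)))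
    (h : ContainsC a l k (restPerm π)) : ContainsC a l k π := by
  obtain ⟨σ, h0, h1, c1, c2, ι', mono, adj, iso⟩ := h
  refine ⟨σ, h0, h1, c1, c2, fun s => (ι' s).succ, ?_, ?_, ?_⟩
  · intro s t hst
    exact Fin.succ_lt_succ_iff.mpr (mono hst)
  · intro j hj hadj
    have := adj j hj hadj
    simp only [Fin.val_succ]
    omega
  · intro s t
    rw [iso s t, restPerm_spec π (ι' s), restPerm_spec π (ι' t)]
    exact ((Fin.strictMono_succAbove (π 0)).lt_iff_lt).symm

lemma containsC_push {m : ℕ} (π : Perm (Fin (m + 1)))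
    (σ : Perm (Fin k)) (h0 : 0 < k) (h1 : 1 < k)
    (c1 : (σ ⟨0, h0⟩ : ℕ) + 1 = a) (c2 : (σ ⟨1, h1⟩ : ℕ) + 1 = a + l)
    (ι : Fin k → Fin (m + 1)) (mono : StrictMono ι)
    (adj : ∀ j : ℕ, ∀ hj : j + 1 < k, j = 0 → (ι ⟨j + 1, hj⟩ : ℕ) = (ι ⟨j, by omega⟩ : ℕ) + 1)
    (iso : ∀ s t : Fin k, σ s < σ t ↔ π (ι s) < π (ι t))
    (hz : (ι ⟨0, h0⟩ : ℕ) ≠ 0) : ContainsC a l k (restPerm π) := by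
  have hpos : ∀ s, 1 ≤ (ι s : ℕ) := by
    intro s
    have h01 : (⟨0, h0⟩ : Fin k) ≤ s := by simp [Fin.le_def]
    have := mono.monotone h01
    rw [Fin.le_def] at this
    omega
  have hlt : ∀ s, (ι s : ℕ) - 1 < m := by
    intro s; have := (ι s).isLt; have := hpos s; omega
  set ι'' : Fin k → Fin m := fun s => ⟨(ι s : ℕ) - 1, hlt s⟩ with hι''
  have hsucc : ∀ s, (ι'' s).succ = ι s := by
    intro s; ext; simp only [Fin.val_succ, hι'']; have := hpos s; omega
  have hval : ∀ s, π (ι s) = (π 0).succAbove (restPerm π (ι'' s)) := by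
    intro s; rw [← hsucc s, restPerm_spec]
  refine ⟨σ, h0, h1, c1, c2, ι'', ?_, ?_, ?_⟩
  · intro s t hst
    have := mono hst
    rw [Fin.lt_def] at this ⊢
    simp only [hι'']
    have := hpos s; omega
  · intro j hj hadj
    have := adj j hj hadj
    subst hadj
    simp only [hι'']
    have := hpos (⟨0, by omega⟩ : Fin k)
    omega
  · intro s t
    rw [iso s t, hval s, hval t]
    exact (Fin.strictMono_succAbove (π 0)).lt_iff_lt

lemma forwardT (ha : 1 ≤ a) (hl : 1 ≤ l) (hk : a + l ≤ k) {m : ℕ}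
    (π : Perm (Fin (m + 2))) (h : ContainsC a l k π) :
    ContainsC a l k (restPerm π) ∨
      (a ≤ (π 0 : ℕ) + 1 ∧ (π 0 : ℕ) + l ≤ (π 1 : ℕ) ∧ (π 1 : ℕ) + (k - a - l) ≤ m + 1) := by
  obtain ⟨σ, h0, h1, c1, c2, ι, mono, adj, iso⟩ := h
  by_cases hz : (ι ⟨0, h0⟩ : ℕ) = 0
  · right
    have hι0 : ι ⟨0, h0⟩ = 0 := by ext; simpa using hz
    have hι1 : ι ⟨1, h1⟩ = 1 := by
      have := adj 0 h1 rfl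
      ext
      simp only [this, hz]
      simp [Fin.val_one]
    have hσ01 : σ ⟨0, h0⟩ < σ ⟨1, h1⟩ := by
      rw [Fin.lt_def]; omega
    have huv : π 0 < π 1 := by
      have := (iso ⟨0, h0⟩ ⟨1, h1⟩).mp hσ01
      rwa [hι0, hι1] at this
    -- (i) lower values
    have hA : a - 1 ≤ (π 0 : ℕ) := by
      let f : {c : Fin k // (c : ℕ) < a - 1} → {w : Fin (m + 2) // (w : ℕ) < (π 0 : ℕ)} :=
        fun c => ⟨π (ι (σ.symm c.1)), by
          have hcσ : σ (σ.symm c.1) < σ ⟨0, h0⟩ := by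
            rw [Equiv.apply_symm_apply, Fin.lt_def]
            have := c.2; omega
          have := (iso (σ.symm c.1) ⟨0, h0⟩).mp hcσ
          rwa [hι0] at this⟩
      have finj : Function.Injective f := by
        intro x y hxy
        have : π (ι (σ.symm x.1)) = π (ι (σ.symm y.1)) := congrArg Subtype.val hxy
        exact Subtype.ext (σ.symm.injective (mono.injective (π.injective this)))
      have hc := Nat.card_le_card_of_injective f finj
      rw [card_lt k (a - 1) (by omega), card_lt (m + 2) (π 0 : ℕ) (by omega)] at hc
      exact hc
    -- (ii) middle values
    have hB : l - 1 ≤ (π 1 : ℕ) - (π 0 : ℕ) - 1 := by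
      let f : {c : Fin k // a - 1 < (c : ℕ) ∧ (c : ℕ) < a + l - 1} →
          {w : Fin (m + 2) // (π 0 : ℕ) < (w : ℕ) ∧ (w : ℕ) < (π 1 : ℕ)} :=
        fun c => ⟨π (ι (σ.symm c.1)), by
          have hcσ : σ ⟨0, h0⟩ < σ (σ.symm c.1) := by
            rw [Equiv.apply_symm_apply, Fin.lt_def]
            have := c.2.1; omega
          have hx := (iso ⟨0, h0⟩ (σ.symm c.1)).mp hcσ
          rw [hι0] at hx
          exact hx, by
          have hcσ : σ (σ.symm c.1) < σ ⟨1, h1⟩ := by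
            rw [Equiv.apply_symm_apply, Fin.lt_def]
            have := c.2.2; omega
          have hx := (iso (σ.symm c.1) ⟨1, h1⟩).mp hcσ
          rw [hι1] at hx
          exact hx⟩
      have finj : Function.Injective f := by
        intro x y hxy
        have : π (ι (σ.symm x.1)) = π (ι (σ.symm y.1)) := congrArg Subtype.val hxy
        exact Subtype.ext (σ.symm.injective (mono.injective (π.injective this)))
      have hc := Nat.card_le_card_of_injective f finj
      rw [card_between k (a - 1) (a + l - 1) (by omega),
        card_between (m + 2) (π 0 : ℕ) (π 1 : ℕ) (by omega)] at hc
      omega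
    -- (iii) upper values
    have hC : k - (a + l - 1) - 1 ≤ (m + 2) - (π 1 : ℕ) - 1 := by
      let f : {c : Fin k // a + l - 1 < (c : ℕ)} →
          {w : Fin (m + 2) // (π 1 : ℕ) < (w : ℕ)} :=
        fun c => ⟨π (ι (σ.symm c.1)), by
          have hcσ : σ ⟨1, h1⟩ < σ (σ.symm c.1) := by
            rw [Equiv.apply_symm_apply, Fin.lt_def]
            have := c.2; omega
          have hx := (iso ⟨1, h1⟩ (σ.symm c.1)).mp hcσ
          rw [hι1] at hx
          exact hx⟩
      have finj : Function.Injective f := by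
        intro x y hxy
        have : π (ι (σ.symm x.1)) = π (ι (σ.symm y.1)) := congrArg Subtype.val hxy
        exact Subtype.ext (σ.symm.injective (mono.injective (π.injective this)))
      have hc := Nat.card_le_card_of_injective f finj
      rw [card_gt k (a + l - 1), card_gt (m + 2) (π 1 : ℕ)] at hc
      exact hc
    have huvn : (π 0 : ℕ) < (π 1 : ℕ) := huv
    have hv2 : (π 1 : ℕ) < m + 2 := (π 1).isLt
    refine ⟨by omega, by omega, by omega⟩
  · left
    exact containsC_push π σ h0 h1 c1 c2 ι mono adj iso hz

end Transfer

section BadConstruction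
variable {a l k : ℕ}

set_option maxHeartbeats 1000000 in
lemma containsC_of_bad (ha : 1 ≤ a) (hl : 1 ≤ l) (hk : a + l ≤ k) {m : ℕ}
    (π : Perm (Fin (m + 2)))
    (b1 : a ≤ (π 0 : ℕ) + 1) (b2 : (π 0 : ℕ) + l ≤ (π 1 : ℕ))
    (b3 : (π 1 : ℕ) + (k - a - l) ≤ m + 1) : ContainsC a l k π := by
  have hk0 : 0 < k := by omega
  have hk1 : 1 < k := by omega
  set U : ℕ := (π 0 : ℕ) with hU
  set V : ℕ := (π 1 : ℕ) with hV
  set gv : ℕ → ℕ := fun c =>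
    if c < a - 1 then c else if c < a + l - 1 then U + (c - (a - 1)) else V + (c - (a + l - 1))
    with hgv
  have hglt : ∀ c, c < k → gv c < m + 2 := by
    intro c hc
    simp only [hgv]
    split_ifs <;> omega
  have hgmono : ∀ c c', c' < k → c < c' → gv c < gv c' := by
    intro c c' hc' hcc
    simp only [hgv]
    split_ifs <;> omega
  set g : Fin k → Fin (m + 2) := fun c => ⟨gv c, hglt c c.isLt⟩ with hg
  have hgsm : StrictMono g := by
    intro c c' hcc
    rw [Fin.lt_def]
    exact hgmono c c' c'.isLt hcc
  have hga : gv (a - 1) = U := by simp only [hgv]; split_ifs <;> omega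
  have hgb : gv (a + l - 1) = V := by simp only [hgv]; split_ifs <;> omega
  have hgaF : g ⟨a - 1, by omega⟩ = π 0 := by ext; simpa [hg] using hga
  have hgbF : g ⟨a + l - 1, by omega⟩ = π 1 := by ext; simpa [hg] using hgb
  set h' : Fin k → Fin (m + 2) := fun c => π.symm (g c) with hh'
  have hinj : Function.Injective h' := fun x y hxy =>
    hgsm.injective (π.symm.injective hxy)
  set P : Finset (Fin (m + 2)) := Finset.univ.image h' with hP
  have hcard : P.card = k := by
    rw [hP, Finset.card_image_of_injective _ hinj, Finset.card_univ, Fintype.card_fin]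
  set ι' : Fin k ≃o {x // x ∈ P} := P.orderIsoOfFin hcard with hι'
  set ι : Fin k → Fin (m + 2) := fun s => (ι' s : Fin (m + 2)) with hι
  have hιsm : StrictMono ι := fun s t hst => ι'.lt_iff_lt.mpr hst
  have mem0 : (0 : Fin (m + 2)) ∈ P := by
    rw [hP, Finset.mem_image]
    exact ⟨⟨a - 1, by omega⟩, Finset.mem_univ _, by
      simp only [hh', hgaF]; exact π.symm_apply_apply 0⟩
  have mem1 : (1 : Fin (m + 2)) ∈ P := by
    rw [hP, Finset.mem_image]
    exact ⟨⟨a + l - 1, by omega⟩, Finset.mem_univ _, by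
      simp only [hh', hgbF]; exact π.symm_apply_apply 1⟩
  have hι0 : ι ⟨0, hk0⟩ = 0 := by
    obtain ⟨s, hs⟩ := ι'.surjective ⟨0, mem0⟩
    have h1 : ι ⟨0, hk0⟩ ≤ ι s := hιsm.monotone (by simp [Fin.le_def])
    have h2 : ι s = 0 := congrArg Subtype.val hs
    rw [h2] at h1
    exact le_antisymm h1 (Fin.zero_le _)
  have hι1 : ι ⟨1, hk1⟩ = 1 := by
    obtain ⟨s, hs⟩ := ι'.surjective ⟨1, mem1⟩
    have h2 : ι s = 1 := congrArg Subtype.val hs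
    have hsne : s ≠ ⟨0, hk0⟩ := by
      intro hc
      rw [hc, hι0] at h2
      exact absurd h2.symm (by simp [Fin.ext_iff])
    have hle : (⟨1, hk1⟩ : Fin k) ≤ s := by
      rw [Fin.le_def]
      have := s.isLt
      show 1 ≤ (s : ℕ)
      have hsval : (s : ℕ) ≠ 0 := fun hc => hsne (Fin.ext (by simp [hc]))
      omega
    have h1 : ι ⟨1, hk1⟩ ≤ ι s := hιsm.monotone hle
    rw [h2] at h1
    have h3 : ι ⟨0, hk0⟩ < ι ⟨1, hk1⟩ := hιsm (Fin.mk_lt_mk.mpr Nat.zero_lt_one)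
    rw [hι0] at h3
    have hone : ((1 : Fin (m + 2)) : ℕ) = 1 := Fin.val_one m
    have hv1 : (ι ⟨1, hk1⟩ : ℕ) ≤ 1 := by have := Fin.le_def.mp h1; rwa [hone] at this
    have hv3 : 0 < (ι ⟨1, hk1⟩ : ℕ) := by
      have := Fin.lt_def.mp h3
      simpa using this
    apply Fin.ext
    rw [hone]
    omega
  -- the pattern permutation
  have hbij : Function.Bijective (fun c : Fin k => (⟨h' c, by
      rw [hP, Finset.mem_image]; exact ⟨c, Finset.mem_univ _, rfl⟩⟩ : {x // x ∈ P})) := by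
    rw [Fintype.bijective_iff_injective_and_card]
    constructor
    · intro x y hxy
      exact hinj (Subtype.ext_iff.mp hxy)
    · rw [Fintype.card_coe, hcard, Fintype.card_fin]
  set e : Fin k ≃ {x // x ∈ P} := Equiv.ofBijective _ hbij with he
  set σ : Perm (Fin k) := ι'.toEquiv.trans e.symm with hσ
  have hσspec : ∀ s, h' (σ s) = ι s := by
    intro s
    have h1 : e (σ s) = ι' s := by
      show e (e.symm (ι'.toEquiv s)) = ι' s
      rw [e.apply_symm_apply]
      rfl
    exact congrArg Subtype.val h1
  have hval : ∀ s, π (ι s) = g (σ s) := by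
    intro s
    rw [← hσspec s]
    simp only [hh']
    exact (π.apply_symm_apply _)
  have iso : ∀ s t, σ s < σ t ↔ π (ι s) < π (ι t) := by
    intro s t
    rw [hval s, hval t]
    exact hgsm.lt_iff_lt.symm
  have hσ0 : σ ⟨0, hk0⟩ = ⟨a - 1, by omega⟩ := by
    have e1 : h' (σ ⟨0, hk0⟩) = 0 := (hσspec _).trans hι0
    have e2 : h' (⟨a - 1, by omega⟩ : Fin k) = 0 := by
      show π.symm (g ⟨a - 1, by omega⟩) = 0
      rw [hgaF]
      exact π.symm_apply_apply 0
    exact hinj (e1.trans e2.symm)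
  have hσ1 : σ ⟨1, hk1⟩ = ⟨a + l - 1, by omega⟩ := by
    have e1 : h' (σ ⟨1, hk1⟩) = 1 := (hσspec _).trans hι1
    have e2 : h' (⟨a + l - 1, by omega⟩ : Fin k) = 1 := by
      show π.symm (g ⟨a + l - 1, by omega⟩) = 1
      rw [hgbF]
      exact π.symm_apply_apply 1
    exact hinj (e1.trans e2.symm)
  refine ⟨σ, hk0, hk1, ?_, ?_, ι, hιsm, ?_, iso⟩
  · rw [hσ0]; simp; omega
  · rw [hσ1]; simp; omega
  · intro j hj hadj
    subst hadj
    have e0 : (⟨0, by omega⟩ : Fin k) = ⟨0, hk0⟩ := rfl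
    have e1 : (⟨0 + 1, hj⟩ : Fin k) = ⟨1, hk1⟩ := rfl
    rw [e0, e1, hι0, hι1]
    simp

end BadConstruction

section Counting
variable {a l k : ℕ}

lemma transferT (ha : 1 ≤ a) (hl : 1 ≤ l) (hk : a + l ≤ k) {m : ℕ}
    (π : Perm (Fin (m + 2))) :
    ContainsC a l k π ↔ ContainsC a l k (restPerm π) ∨
      (a ≤ (π 0 : ℕ) + 1 ∧ (π 0 : ℕ) + l ≤ (π 1 : ℕ) ∧ (π 1 : ℕ) + (k - a - l) ≤ m + 1) :=
  ⟨forwardT ha hl hk π, fun h => h.elim (containsC_of_rest π)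
    (fun hb => containsC_of_bad ha hl hk π hb.1 hb.2.1 hb.2.2)⟩

lemma pi_one_eq {m : ℕ} (π : Perm (Fin (m + 2))) :
    π 1 = (π 0).succAbove (restPerm π 0) := by
  have := restPerm_spec π 0
  rwa [Fin.succ_zero_eq_one] at this

lemma avoids_transfer (ha : 1 ≤ a) (hl : 1 ≤ l) (hk : a + l ≤ k) {m : ℕ}
    (π : Perm (Fin (m + 2))) :
    AvoidsC a l k π ↔ (AvoidsC a l k (restPerm π) ∧
      ¬(a ≤ (π 0 : ℕ) + 1 ∧ (π 0 : ℕ) + l ≤ ((π 0).succAbove (restPerm π 0) : ℕ) ∧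
        ((π 0).succAbove (restPerm π 0) : ℕ) + (k - a - l) ≤ m + 1)) := by
  rw [avoidsC_iff_not_containsC, avoidsC_iff_not_containsC, ← pi_one_eq π,
    transferT ha hl hk π]
  tauto

lemma Rcount (ha : 1 ≤ a) (hl : 1 ≤ l) (hk : a + l ≤ k) (m : ℕ) (j0 : Fin (m + 2)) :
    Nat.card {π : Perm (Fin (m + 2)) // AvoidsC a l k π ∧ π 0 = j0} =
      ∑ q : Fin (m + 1),
        if a ≤ (j0 : ℕ) + 1 ∧ (j0 : ℕ) + l ≤ (j0.succAbove q : ℕ) ∧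
            (j0.succAbove q : ℕ) + (k - a - l) ≤ m + 1
        then 0
        else Nat.card {e : Perm (Fin (m + 1)) // AvoidsC a l k e ∧ e 0 = q} := by
  classical
  set Bd : Fin (m + 1) → Prop := fun q =>
    a ≤ (j0 : ℕ) + 1 ∧ (j0 : ℕ) + l ≤ (j0.succAbove q : ℕ) ∧
      (j0.succAbove q : ℕ) + (k - a - l) ≤ m + 1 with hBd
  have E1 : {π : Perm (Fin (m + 2)) // AvoidsC a l k π ∧ π 0 = j0} ≃
      {e : Perm (Fin (m + 1)) // AvoidsC a l k e ∧ ¬ Bd (e 0)} := by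
    refine ⟨fun π => ⟨restPerm π.1, ?_⟩, fun e => ⟨buildPerm j0 e.1, ?_⟩, ?_, ?_⟩
    · obtain ⟨π, hav, h0⟩ := π
      have h := (avoids_transfer ha hl hk π).mp hav
      rw [h0] at h
      exact ⟨h.1, h.2⟩
    · obtain ⟨e, hav, hnb⟩ := e
      have h0 : buildPerm j0 e 0 = j0 := buildPerm_zero j0 e
      have hrest : restPerm (buildPerm j0 e) = e := restPerm_buildPerm j0 e
      constructor
      · rw [avoids_transfer ha hl hk (buildPerm j0 e), hrest, h0]
        exact ⟨hav, hnb⟩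
      · exact h0
    · rintro ⟨π, hav, h0⟩
      apply Subtype.ext
      show buildPerm j0 (restPerm π) = π
      rw [← h0]
      exact buildPerm_restPerm π
    · rintro ⟨e, hav, hnb⟩
      apply Subtype.ext
      show restPerm (buildPerm j0 e) = e
      exact restPerm_buildPerm j0 e
  rw [Nat.card_congr (E1.trans (Equiv.sigmaFiberEquiv
    (fun e : {e : Perm (Fin (m + 1)) // AvoidsC a l k e ∧ ¬ Bd (e 0)} => e.1 0)).symm)]
  rw [Nat.card_eq_fintype_card, Fintype.card_sigma]
  apply Finset.sum_congr rfl
  intro q _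
  by_cases hb : Bd q
  · rw [if_pos hb]
    have : IsEmpty {x : {e : Perm (Fin (m + 1)) // AvoidsC a l k e ∧ ¬ Bd (e 0)} //
        x.1 0 = q} := by
      refine ⟨fun x => ?_⟩
      exact x.1.2.2 (by rw [x.2]; exact hb)
    exact Fintype.card_eq_zero
  · rw [if_neg hb, ← Nat.card_eq_fintype_card]
    apply Nat.card_congr
    refine ⟨fun x => ⟨x.1.1, x.1.2.1, x.2⟩, fun e => ⟨⟨e.1, e.2.1, ?_⟩, e.2.2⟩, ?_, ?_⟩
    · rw [e.2.2]; exact hb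
    · rintro ⟨⟨e, he⟩, hq⟩; rfl
    · rintro ⟨e, he⟩; rfl

lemma cCf_eq_card (N : ℕ) (j0 : Fin (N + 1)) :
    cCf a l k (N + 1) ((j0 : ℕ) + 1) =
      Nat.card {π : Perm (Fin (N + 1)) // AvoidsC a l k π ∧ π 0 = j0} := by
  unfold cCf
  apply Nat.card_congr
  apply Equiv.subtypeEquivRight
  intro π
  constructor
  · rintro ⟨hav, h0⟩
    refine ⟨hav, ?_⟩
    have := h0 (Nat.succ_pos N)
    apply Fin.ext
    have hz : (⟨0, Nat.succ_pos N⟩ : Fin (N + 1)) = 0 := rfl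
    rw [hz] at this
    omega
  · rintro ⟨hav, h0⟩
    refine ⟨hav, fun hn => ?_⟩
    have hz : (⟨0, hn⟩ : Fin (N + 1)) = 0 := rfl
    rw [hz, h0]

lemma partitionS (N : ℕ) :
    cC a l k (N + 1) = ∑ q : Fin (N + 1), cCf a l k (N + 1) ((q : ℕ) + 1) := by
  classical
  unfold cC
  rw [Nat.card_congr (Equiv.sigmaFiberEquiv
    (fun π : {π : Perm (Fin (N + 1)) // AvoidsC a l k π} => π.1 0)).symm]
  rw [Nat.card_eq_fintype_card, Fintype.card_sigma]
  apply Finset.sum_congr rfl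
  intro q _
  rw [cCf_eq_card N q, ← Nat.card_eq_fintype_card]
  apply Nat.card_congr
  refine ⟨fun x => ⟨x.1.1, x.1.2, x.2⟩, fun e => ⟨⟨e.1, e.2.1⟩, e.2.2⟩, ?_, ?_⟩
  · rintro ⟨⟨e, he⟩, hq⟩; rfl
  · rintro ⟨e, he⟩; rfl

end Counting

section NatForm
variable {a l k : ℕ}

lemma coe_succAbove {m : ℕ} (p : Fin (m + 1)) (i : Fin m) :
    (p.succAbove i : ℕ) = if (i : ℕ) < (p : ℕ) then (i : ℕ) else (i : ℕ) + 1 := by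
  by_cases h : (i : ℕ) < (p : ℕ)
  · rw [if_pos h, Fin.succAbove, if_pos (by rw [Fin.lt_def, Fin.coe_castSucc]; exact h)]
    exact Fin.coe_castSucc i
  · rw [if_neg h, Fin.succAbove, if_neg (by rw [Fin.lt_def, Fin.coe_castSucc]; exact h)]
    exact Fin.val_succ i

lemma Rform (ha : 1 ≤ a) (hl : 1 ≤ l) (hk : a + l ≤ k) (m : ℕ) (j0 : ℕ) (hj0 : j0 ≤ m + 1) :
    cCf a l k (m + 2) (j0 + 1) +
      ∑ q ∈ (Finset.range (m + 1)).filter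
        (fun q => a ≤ j0 + 1 ∧ j0 + l ≤ q + 1 ∧ q + (k - a - l) ≤ m),
        cCf a l k (m + 1) (q + 1) = cC a l k (m + 1) := by
  set j0F : Fin (m + 2) := ⟨j0, by omega⟩ with hj0F
  have h1 : cCf a l k (m + 2) (j0 + 1) =
      ∑ q : Fin (m + 1),
        if a ≤ (j0F : ℕ) + 1 ∧ (j0F : ℕ) + l ≤ (j0F.succAbove q : ℕ) ∧
            (j0F.succAbove q : ℕ) + (k - a - l) ≤ m + 1
        then 0 else cCf a l k (m + 1) ((q : ℕ) + 1) := by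
    have := cCf_eq_card (a := a) (l := l) (k := k) (m + 1) j0F
    rw [show ((j0F : ℕ) + 1) = j0 + 1 from rfl] at this
    rw [this, Rcount ha hl hk m j0F]
    apply Finset.sum_congr rfl
    intro q _
    by_cases hb : a ≤ (j0F : ℕ) + 1 ∧ (j0F : ℕ) + l ≤ (j0F.succAbove q : ℕ) ∧
        (j0F.succAbove q : ℕ) + (k - a - l) ≤ m + 1
    · rw [if_pos hb, if_pos hb]
    · rw [if_neg hb, if_neg hb, cCf_eq_card m q]
  have hS : cC a l k (m + 1) = ∑ q : Fin (m + 1), cCf a l k (m + 1) ((q : ℕ) + 1) :=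
    partitionS m
  have hcond : ∀ q : Fin (m + 1),
      (a ≤ (j0F : ℕ) + 1 ∧ (j0F : ℕ) + l ≤ (j0F.succAbove q : ℕ) ∧
        (j0F.succAbove q : ℕ) + (k - a - l) ≤ m + 1) ↔
      (a ≤ j0 + 1 ∧ j0 + l ≤ (q : ℕ) + 1 ∧ (q : ℕ) + (k - a - l) ≤ m) := by
    intro q
    have hs := coe_succAbove j0F q
    have hv : (j0F : ℕ) = j0 := rfl
    by_cases hq : (q : ℕ) < j0
    · rw [hv] at hs
      rw [if_pos hq] at hs
      rw [hs, hv]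
      omega
    · rw [hv] at hs
      rw [if_neg hq] at hs
      rw [hs, hv]
      omega
  have h2 : cCf a l k (m + 2) (j0 + 1) =
      ∑ q : Fin (m + 1),
        if a ≤ j0 + 1 ∧ j0 + l ≤ (q : ℕ) + 1 ∧ (q : ℕ) + (k - a - l) ≤ m
        then 0 else cCf a l k (m + 1) ((q : ℕ) + 1) := by
    rw [h1]
    apply Finset.sum_congr rfl
    intro q _
    by_cases hb : a ≤ j0 + 1 ∧ j0 + l ≤ (q : ℕ) + 1 ∧ (q : ℕ) + (k - a - l) ≤ m
    · rw [if_pos ((hcond q).mpr hb), if_pos hb]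
    · rw [if_neg (fun hc => hb ((hcond q).mp hc)), if_neg hb]
  have h3 : ∑ q ∈ (Finset.range (m + 1)).filter
      (fun q => a ≤ j0 + 1 ∧ j0 + l ≤ q + 1 ∧ q + (k - a - l) ≤ m),
      cCf a l k (m + 1) (q + 1) =
      ∑ q : Fin (m + 1),
        if a ≤ j0 + 1 ∧ j0 + l ≤ (q : ℕ) + 1 ∧ (q : ℕ) + (k - a - l) ≤ m
        then cCf a l k (m + 1) ((q : ℕ) + 1) else 0 := by
    rw [Finset.sum_filter, ← Fin.sum_univ_eq_sum_range]
  rw [h2, h3, ← Finset.sum_add_distrib, hS]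
  apply Finset.sum_congr rfl
  intro q _
  split_ifs <;> simp

lemma avoids_of_small {n : ℕ} (hkn : n < k) (π : Perm (Fin n)) : AvoidsC a l k π := by
  rw [avoidsC_iff_not_containsC]
  rintro ⟨σ, h0, h1, c1, c2, ι, mono, adj, iso⟩
  have hinj := mono.injective
  have := Fintype.card_le_of_injective ι hinj
  simp only [Fintype.card_fin] at this
  omega

lemma cC_zero (hk0 : 0 < k) : cC a l k 0 = 1 := by
  unfold cC
  rw [Nat.card_congr (Equiv.subtypeUnivEquiv (avoids_of_small hk0))]
  rw [Nat.card_eq_fintype_card]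
  simp

lemma cCf_one_one (hk1 : 1 < k) : cCf a l k 1 1 = cC a l k 0 := by
  rw [cC_zero (by omega)]
  unfold cCf
  rw [Nat.card_congr (Equiv.subtypeUnivEquiv (fun π => ⟨avoids_of_small hk1 π, fun hn => by
    have : π ⟨0, hn⟩ = 0 := Subsingleton.elim _ _
    rw [this]
    rfl⟩))]
  rw [Nat.card_eq_fintype_card]
  simp

end NatForm

section Arith

/-- The weight `(-1)^j * C(i - (j-1)(l-1), j)`. -/
def wt (l i j : ℕ) : ℤ :=
  (-1 : ℤ) ^ j * (Nat.choose ((i : ℤ) - ((j : ℤ) - 1) * ((l : ℤ) - 1)).toNat j : ℤ)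

lemma toNat_arg_eq (l i j : ℕ) (hl : 1 ≤ l) (hj : 1 ≤ j) :
    ((i : ℤ) - ((j : ℤ) - 1) * ((l : ℤ) - 1)).toNat = i - (j - 1) * (l - 1) := by
  have h : ((j : ℤ) - 1) * ((l : ℤ) - 1) = (((j - 1) * (l - 1) : ℕ) : ℤ) := by
    push_cast [Nat.cast_sub hj, Nat.cast_sub hl]
    ring
  rw [h]
  omega

lemma wt_zero_right (l i : ℕ) : wt l i 0 = 1 := by
  simp [wt]

lemma wt_one_right (l i : ℕ) : wt l i 1 = -(i : ℤ) := by
  simp [wt, Nat.choose_one_right]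

lemma wt_eq_zero (l i j : ℕ) (hl : 1 ≤ l) (hij : (i - 1) / l + 2 ≤ j) : wt l i j = 0 := by
  have hj : 1 ≤ j := le_trans (Nat.le_add_left 1 _) hij
  have hjl : i ≤ (j - 1) * l := by
    rcases Nat.eq_zero_or_pos i with hi | hi
    · exact hi ▸ Nat.zero_le _
    · have hdm := Nat.div_add_mod (i - 1) l
      have hmod : (i - 1) % l < l := Nat.mod_lt _ (by omega)
      set t := (i - 1) / l with ht
      calc i = l * t + (i - 1) % l + 1 := by omega
        _ ≤ l * t + l := by omega
        _ = (t + 1) * l := by ring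
        _ ≤ (j - 1) * l := Nat.mul_le_mul_right l (by omega)
  have hprod : (j - 1) * l = (j - 1) * (l - 1) + (j - 1) := by
    obtain ⟨l', rfl⟩ : ∃ l', l = l' + 1 := ⟨l - 1, by omega⟩
    have h1 : l' + 1 - 1 = l' := by omega
    rw [h1]
    ring
  rw [wt, toNat_arg_eq l i j hl hj]
  have hlt : i - (j - 1) * (l - 1) < j := by omega
  rw [Nat.choose_eq_zero_of_lt hlt]
  simp

lemma sum_choose_hockey (l i j : ℕ) (hl : 1 ≤ l) (hli : l < i) (hj : 1 ≤ j) :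
    ∑ i' ∈ Finset.Icc 1 (i - l), Nat.choose (i' - (j - 1) * (l - 1)) j
      = Nat.choose (i - j * (l - 1)) (j + 1) := by
  obtain ⟨j', rfl⟩ : ∃ j', j = j' + 1 := ⟨j - 1, by omega⟩
  obtain ⟨l', rfl⟩ : ∃ l', l = l' + 1 := ⟨l - 1, by omega⟩
  simp only [Nat.add_sub_cancel]
  -- now: ∑_{i' ∈ Icc 1 (i - (l'+1))}, choose (i' - j' * l') (j'+1) = choose (i - (j'+1)*l') (j'+2)
  set p := j' * l' with hp
  have hq : (j' + 1) * l' = p + l' := by rw [hp]; ring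
  by_cases hc : i ≤ p + j' + l' + 1
  · have hrhs : i - (j' + 1) * l' < j' + 1 + 1 := by omega
    rw [Nat.choose_eq_zero_of_lt hrhs]
    apply Finset.sum_eq_zero
    intro i' hi'
    rw [Finset.mem_Icc] at hi'
    apply Nat.choose_eq_zero_of_lt
    omega
  · push_neg at hc
    have hB : p + j' ≤ i - (l' + 1) := by omega
    rw [show Finset.Icc 1 (i - (l' + 1)) = Finset.Ioc 0 (i - (l' + 1)) from by
      ext x; simp [Finset.mem_Icc, Finset.mem_Ioc]; omega]
    rw [← Finset.sum_Ioc_consecutive _ (Nat.zero_le (p + j')) hB]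
    have hzero : ∑ i' ∈ Finset.Ioc 0 (p + j'), Nat.choose (i' - j' * l') (j' + 1) = 0 := by
      apply Finset.sum_eq_zero
      intro i' hi'
      rw [Finset.mem_Ioc] at hi'
      apply Nat.choose_eq_zero_of_lt
      omega
    rw [hzero, zero_add]
    have hmap : Finset.Ioc (p + j') (i - (l' + 1)) =
        Finset.map (addRightEmbedding p) (Finset.Ioc j' (i - (l' + 1) - p)) := by
      rw [Finset.map_add_right_Ioc]
      congr 1 <;> omega
    rw [hmap, Finset.sum_map]
    have hterm : ∀ s ∈ Finset.Ioc j' (i - (l' + 1) - p),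
        Nat.choose ((addRightEmbedding p) s - j' * l') (j' + 1) = Nat.choose s (j' + 1) := by
      intro s _
      have : (addRightEmbedding p) s = s + p := rfl
      rw [this, hp]
      congr 1
      omega
    rw [Finset.sum_congr rfl hterm]
    rw [show Finset.Ioc j' (i - (l' + 1) - p) = Finset.Icc (j' + 1) (i - (l' + 1) - p) from by
      ext x; simp [Finset.mem_Icc, Finset.mem_Ioc]]
    rw [Nat.sum_Icc_choose (i - (l' + 1) - p) (j' + 1)]
    congr 1
    rw [hq]
    omega

lemma wt_rec (l i j : ℕ) (hl : 1 ≤ l) (hli : l < i) (hj : 1 ≤ j) :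
    wt l i (j + 1) = - ∑ i' ∈ Finset.Icc 1 (i - l), wt l i' j := by
  have h1 : wt l i (j + 1) =
      (-1 : ℤ) ^ (j + 1) * (Nat.choose (i - j * (l - 1)) (j + 1) : ℤ) := by
    rw [wt, toNat_arg_eq l i (j + 1) hl (by omega)]
    norm_num
  have h2 : ∀ i' ∈ Finset.Icc 1 (i - l),
      wt l i' j = (-1 : ℤ) ^ j * (Nat.choose (i' - (j - 1) * (l - 1)) j : ℤ) := by
    intro i' _
    rw [wt, toNat_arg_eq l i' j hl hj]
  rw [h1, Finset.sum_congr rfl h2, ← Finset.mul_sum]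
  rw [← Nat.cast_sum, sum_choose_hockey l i j hl hli hj]
  ring

lemma keyIdentity (l i : ℕ) (hl : 1 ≤ l) (hli : l < i) (C : ℕ → ℤ) :
    ∑ j ∈ Finset.range ((i - 1) / l + 2), wt l i j * C j
      = C 0 - l * C 1 -
        ∑ i' ∈ Finset.Icc 1 (i - l), ∑ j ∈ Finset.range ((i' - 1) / l + 2), wt l i' j * C (j + 1) := by
  have hpadL : ∑ j ∈ Finset.range ((i - 1) / l + 2), wt l i j * C j
      = ∑ j ∈ Finset.range (i + 2), wt l i j * C j := by
    apply Finset.sum_subset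
    · apply Finset.range_subset_range.mpr
      have := Nat.div_le_self (i - 1) l
      omega
    · intro x _ hx
      rw [Finset.mem_range, not_lt] at hx
      rw [wt_eq_zero l i x hl hx, zero_mul]
  have hpadI : ∀ i' ∈ Finset.Icc 1 (i - l),
      ∑ j ∈ Finset.range ((i' - 1) / l + 2), wt l i' j * C (j + 1)
        = ∑ j ∈ Finset.range (i + 1), wt l i' j * C (j + 1) := by
    intro i' hi'
    rw [Finset.mem_Icc] at hi'
    apply Finset.sum_subset
    · apply Finset.range_subset_range.mpr
      have := Nat.div_le_self (i' - 1) l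
      omega
    · intro x _ hx
      rw [Finset.mem_range, not_lt] at hx
      have : (i' - 1) / l + 2 ≤ x := by
        have := Nat.div_le_self (i' - 1) l
        omega
      rw [wt_eq_zero l i' x hl this, zero_mul]
  rw [hpadL, Finset.sum_congr rfl hpadI, Finset.sum_comm]
  rw [Finset.sum_range_succ' (fun j => wt l i j * C j) (i + 1)]
  rw [wt_zero_right, one_mul]
  have key : ∀ j ∈ Finset.range (i + 1),
      wt l i (j + 1) * C (j + 1) + ∑ i' ∈ Finset.Icc 1 (i - l), wt l i' j * C (j + 1)
        = if j = 0 then -(l : ℤ) * C 1 else 0 := by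
    intro j hj
    rw [← Finset.sum_mul, ← add_mul]
    rcases Nat.eq_zero_or_pos j with h0 | h0
    · subst h0
      rw [if_pos rfl, wt_one_right]
      have hsum : ∑ i' ∈ Finset.Icc 1 (i - l), wt l i' 0 = ((i - l : ℕ) : ℤ) := by
        rw [Finset.sum_congr rfl (fun i' _ => wt_zero_right l i')]
        rw [Finset.sum_const, Nat.card_Icc]
        simp
      rw [hsum]
      have : -(i : ℤ) + ((i - l : ℕ) : ℤ) = -(l : ℤ) := by
        have : (((i - l) : ℕ) : ℤ) = (i : ℤ) - l := by omega
        rw [this]; ring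
      rw [this]
    · rw [if_neg (by omega), wt_rec l i j hl hli h0]
      simp
  have hsplit : ∑ j ∈ Finset.range (i + 1), wt l i (j + 1) * C (j + 1)
      + ∑ j ∈ Finset.range (i + 1), ∑ i' ∈ Finset.Icc 1 (i - l), wt l i' j * C (j + 1)
      = -(l : ℤ) * C 1 := by
    rw [← Finset.sum_add_distrib, Finset.sum_congr rfl key]
    have : ∑ j ∈ Finset.range (i + 1), (if j = 0 then -(l : ℤ) * C 1 else 0)
        = -(l : ℤ) * C 1 := by
      rw [Finset.sum_ite_eq' (Finset.range (i + 1)) 0 (fun _ => -(l : ℤ) * C 1)]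
      rw [if_pos (Finset.mem_range.mpr (by omega))]
    rw [this]
  linarith [hsplit]

end Arith

section Main
variable {a l k : ℕ}

lemma cCf_top_s (ha : 1 ≤ a) (hl : 1 ≤ l) (hk : a + l ≤ k) (s j0 : ℕ)
    (hs : 1 ≤ s) (hj : j0 < s) (hcond : s + a ≤ j0 + k) :
    cCf a l k s (j0 + 1) = cC a l k (s - 1) := by
  match s, hs with
  | 1, _ =>
    have hj0 : j0 = 0 := by omega
    subst hj0
    exact cCf_one_one (by omega)
  | (m + 2), _ =>
    have hR := Rform ha hl hk m j0 (by omega)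
    have hempty : (Finset.range (m + 1)).filter
        (fun q => a ≤ j0 + 1 ∧ j0 + l ≤ q + 1 ∧ q + (k - a - l) ≤ m) = ∅ := by
      ext q
      simp only [Finset.mem_filter, Finset.mem_range, Finset.notMem_empty, iff_false]
      rintro ⟨hq, h1, h2, h3⟩
      omega
    rw [hempty, Finset.sum_empty] at hR
    simpa using hR

lemma mainAux (a l k : ℕ) (ha : 1 ≤ a) (hl : 1 ≤ l) (hk : a + l ≤ k) :
    ∀ i n, k ≤ n → 1 ≤ i → i ≤ n - k + 1 →
      (cCf a l k n (n - k + a + 1 - i) : ℤ) =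
        ∑ j ∈ Finset.range ((i - 1) / l + 2), wt l i j * (cC a l k (n - 1 - j) : ℤ) := by
  intro i
  induction i using Nat.strong_induction_on with
  | _ i IH =>
  intro n hn h1 h2
  set d := n - k with hd'
  have hd : n = k + d := by omega
  have hk2 : 2 ≤ k := by omega
  set m := n - 2 with hm'
  have hm : n = m + 2 := by omega
  set j0 := d + a - i with hj0'
  have hj0i : j0 + i = d + a := by omega
  have harg : n - k + a + 1 - i = j0 + 1 := by omega
  rw [harg, hm]
  have hR := Rform ha hl hk m j0 (by omega)
  have hfil : (Finset.range (m + 1)).filter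
      (fun q => a ≤ j0 + 1 ∧ j0 + l ≤ q + 1 ∧ q + (k - a - l) ≤ m) =
      Finset.Ico (j0 + l - 1) (d + a + l - 1) := by
    ext q
    simp only [Finset.mem_filter, Finset.mem_range, Finset.mem_Ico]
    omega
  rw [hfil] at hR
  have hRz : (cCf a l k (m + 2) (j0 + 1) : ℤ) =
      (cC a l k (m + 1) : ℤ) -
        ∑ q ∈ Finset.Ico (j0 + l - 1) (d + a + l - 1), (cCf a l k (m + 1) (q + 1) : ℤ) := by
    have hc := congrArg (Nat.cast : ℕ → ℤ) hR
    push_cast at hc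
    linarith
  have htop : ∀ q, d + a - 1 ≤ q → q < d + a + l - 1 →
      (cCf a l k (m + 1) (q + 1) : ℤ) = (cC a l k m : ℤ) := by
    intro q hq1 hq2
    have := cCf_top_s ha hl hk (m + 1) q (by omega) (by omega) (by omega)
    rw [this]
    norm_num
  by_cases hil : i ≤ l
  · -- all terms are top terms
    have hconst : ∀ q ∈ Finset.Ico (j0 + l - 1) (d + a + l - 1),
        (cCf a l k (m + 1) (q + 1) : ℤ) = (cC a l k m : ℤ) := by
      intro q hq
      rw [Finset.mem_Ico] at hq
      exact htop q (by omega) hq.2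
    have hsum : ∑ q ∈ Finset.Ico (j0 + l - 1) (d + a + l - 1), (cCf a l k (m + 1) (q + 1) : ℤ)
        = (i : ℤ) * (cC a l k m : ℤ) := by
      rw [Finset.sum_congr rfl hconst, Finset.sum_const, Nat.card_Ico]
      have hcard : d + a + l - 1 - (j0 + l - 1) = i := by omega
      rw [hcard]
      simp
    rw [hRz, hsum]
    have hdiv : (i - 1) / l = 0 := Nat.div_eq_of_lt (by omega)
    rw [hdiv]
    rw [Finset.sum_range_succ, Finset.sum_range_one]
    rw [wt_zero_right, wt_one_right]
    have e1 : m + 2 - 1 - 0 = m + 1 := by omega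
    have e2 : m + 2 - 1 - 1 = m := by omega
    rw [e1, e2]
    ring
  · push_neg at hil
    have hd1 : 1 ≤ d := by omega
    rw [← Finset.sum_Ico_consecutive _
      (show j0 + l - 1 ≤ d + a - 1 by omega) (show d + a - 1 ≤ d + a + l - 1 by omega)] at hRz
    have hconst : ∀ q ∈ Finset.Ico (d + a - 1) (d + a + l - 1),
        (cCf a l k (m + 1) (q + 1) : ℤ) = (cC a l k m : ℤ) := by
      intro q hq
      rw [Finset.mem_Ico] at hq
      exact htop q hq.1 hq.2
    have htopsum : ∑ q ∈ Finset.Ico (d + a - 1) (d + a + l - 1),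
        (cCf a l k (m + 1) (q + 1) : ℤ) = (l : ℤ) * (cC a l k m : ℤ) := by
      rw [Finset.sum_congr rfl hconst, Finset.sum_const, Nat.card_Ico]
      have hcard : d + a + l - 1 - (d + a - 1) = l := by omega
      rw [hcard]
      simp
    have hIH : ∀ q ∈ Finset.Ico (j0 + l - 1) (d + a - 1),
        (cCf a l k (m + 1) (q + 1) : ℤ) =
          ∑ j ∈ Finset.range ((d + a - 1 - q - 1) / l + 2),
            wt l (d + a - 1 - q) j * (cC a l k (m - j) : ℤ) := by
      intro q hq
      rw [Finset.mem_Ico] at hq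
      set i' := d + a - 1 - q with hi''
      have hlt : i' < i := by omega
      have := IH i' hlt (m + 1) (by omega) (by omega) (by omega)
      have harg' : m + 1 - k + a + 1 - i' = q + 1 := by omega
      rw [harg'] at this
      rw [this]
      apply Finset.sum_congr rfl
      intro j _
      have : m + 1 - 1 - j = m - j := by omega
      rw [this]
    have hreindex : ∑ q ∈ Finset.Ico (j0 + l - 1) (d + a - 1),
        (cCf a l k (m + 1) (q + 1) : ℤ) =
        ∑ i' ∈ Finset.Icc 1 (i - l),
          ∑ j ∈ Finset.range ((i' - 1) / l + 2), wt l i' j * (cC a l k (m - j) : ℤ) := by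
      rw [Finset.sum_congr rfl hIH]
      apply Finset.sum_nbij' (fun q => d + a - 1 - q) (fun i' => d + a - 1 - i')
      · intro q hq
        rw [Finset.mem_Ico] at hq
        rw [Finset.mem_Icc]
        omega
      · intro i' hi'
        rw [Finset.mem_Icc] at hi'
        rw [Finset.mem_Ico]
        omega
      · intro q hq
        rw [Finset.mem_Ico] at hq
        omega
      · intro i' hi'
        rw [Finset.mem_Icc] at hi'
        omega
      · intro q hq
        rfl
    rw [htopsum, hreindex] at hRz
    rw [hRz]
    have hkey := keyIdentity l i hl hil (fun j => (cC a l k (m + 1 - j) : ℤ))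
    have hC0 : m + 1 - 0 = m + 1 := by omega
    have hC1 : m + 1 - 1 = m := by omega
    have hCsucc : ∀ j : ℕ, m + 1 - (j + 1) = m - j := fun j => by omega
    simp only [hC0, hC1, hCsucc] at hkey
    have hgoal : ∀ j ∈ Finset.range ((i - 1) / l + 2),
        wt l i j * (cC a l k (m + 2 - 1 - j) : ℤ) = wt l i j * (cC a l k (m + 1 - j) : ℤ) := by
      intro j _
      have : m + 2 - 1 - j = m + 1 - j := by omega
      rw [this]
    rw [Finset.sum_congr rfl hgoal]
    rw [hkey]
    ring

end Main


/-- Proposition 2.3: for `1 ≤ a < a + l ≤ k`, `n ≥ k`, and `1 ≤ i ≤ n - k + 1`,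
`c_{a,l}^k(n; n-k+a+1-i) = Σ_{j=0}^{⌊(i-1)/l⌋+1} (-1)^j·binom(i-(j-1)(l-1), j)·c_{a,l}^k(n-1-j)`.
(The binomial coefficient has the integer `i - (j-1)(l-1) ≥ 0` as upper entry.) -/
theorem cCf_closed (a l k n i : ℕ) (ha : 1 ≤ a) (hl : 1 ≤ l) (hk : a + l ≤ k) (hn : k ≤ n)
    (hi1 : 1 ≤ i) (hi2 : i ≤ n - k + 1) :
    (cCf a l k n (n - k + a + 1 - i) : ℤ) =
      ∑ j ∈ Finset.range ((i - 1) / l + 2),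
        (-1 : ℤ) ^ j * Nat.choose ((i : ℤ) - ((j : ℤ) - 1) * ((l : ℤ) - 1)).toNat j *
          cC a l k (n - 1 - j) := by
  rw [mainAux a l k ha hl hk i n hn hi1 hi2]
  apply Finset.sum_congr rfl
  intro j _
  simp only [wt]
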